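/- For n ≥ 2, the formal context K^1_n = (S_n ∪ {g_1}, S_n ∪ {m_1,m_2}, I), where (g,m) ∈ I iff g,m ∈ S_n and g ≠ m, or g = g_1 and m ∈ S_n, or g = 1 and m = m_1, or g ∈ S_n \ {1} and m = m_2, has exactly 2^n + 2^{n−1} + 1 formal concepts. -/

import Mathlib

/-!
A concept is determined by its extent, so it suffices to count the extents `A = A''`.
Closing a set of objects can add only `g₁`, since the attribute `i ∈ Sₙ` is shared by
every object except `i` itself. Moreover `g₁ ∉ A''` exactly when `A` has a
common attribute among `m₁, m₂`, i.e. when `A ⊆ {1}` or `A ⊆ Sₙ \ {1}`. Hence the extents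
are the `2^n` sets containing `g₁`, the `2^(n-1)` subsets of `Sₙ \ {1}`, and `{1}`.
-/

/-- The intent (attribute derivation) of a set of objects. -/
def intentOf {G M : Type*} (I : G → M → Prop) (A : Set G) : Set M :=
  {m | ∀ g ∈ A, I g m}

/-- The extent (object derivation) of a set of attributes. -/
def extentOf {G M : Type*} (I : G → M → Prop) (B : Set M) : Set G :=
  {g | ∀ m ∈ B, I g m}

/-- The formal concepts of a context: pairs `(A, B)` with `A' = B` and `B' = A`. -/
def Concepts {G M : Type*} (I : G → M → Prop) : Set (Set G × Set M) :=
  {p | intentOf I p.1 = p.2 ∧ extentOf I p.2 = p.1}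

/-- The context `K¹_n = (S_n ∪ {g_1}, S_n ∪ {m_1, m_2}, I)`: objects are
`Fin n ⊕ Unit` (with `Sum.inr () = g_1`, and `i : Fin n` coding the element
`i+1` of `S_n = {1,…,n}`); attributes are `Fin n ⊕ Bool` (with
`Sum.inr false = m_1` and `Sum.inr true = m_2`). `(g, m) ∈ I` iff
`g, m ∈ S_n` and `g ≠ m`, or `g = g_1` and `m ∈ S_n`, or `g = 1` (code `0`)
and `m = m_1`, or `g ∈ S_n \ {1}` and `m = m_2`. -/
def K1 (n : ℕ) : (Fin n ⊕ Unit) → (Fin n ⊕ Bool) → Prop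
  | Sum.inl g, Sum.inl m => g ≠ m
  | Sum.inr _, Sum.inl _ => True
  | Sum.inl g, Sum.inr false => (g : ℕ) = 0
  | Sum.inl g, Sum.inr true => (g : ℕ) ≠ 0
  | Sum.inr _, Sum.inr _ => False

open Sum

section FormalConcept

variable {G M : Type*} (I : G → M → Prop)

theorem subset_extentOf_intentOf (A : Set G) : A ⊆ extentOf I (intentOf I A) :=
  fun _ hg _ hm => hm _ hg

def IsExtent (A : Set G) : Prop :=
  extentOf I (intentOf I A) = A

theorem isExtent_of_extentOf_intentOf_subset {A : Set G}
    (h : extentOf I (intentOf I A) ⊆ A) : IsExtent I A :=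
  h.antisymm (subset_extentOf_intentOf I A)

def conceptsEquivExtents : Concepts I ≃ {A : Set G // IsExtent I A} where
  toFun p := ⟨p.1.1, by rw [IsExtent, p.2.1, p.2.2]⟩
  invFun A := ⟨(A.1, intentOf I A.1), rfl, A.2⟩
  left_inv p := Subtype.ext (Prod.ext rfl p.2.1)
  right_inv _ := rfl

end FormalConcept

namespace K1

variable {n : ℕ} {A : Set (Fin n ⊕ Unit)}

theorem inl_mem_intentOf_iff {i : Fin n} : inl i ∈ intentOf (K1 n) A ↔ inl i ∉ A := by
  refine ⟨fun hi hA => hi _ hA rfl, fun hi => ?_⟩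
  rintro (j | _) hj
  · rintro rfl
    exact hi hj
  · trivial

theorem mem_of_inl_mem_extentOf_intentOf {i : Fin n}
    (h : inl i ∈ extentOf (K1 n) (intentOf (K1 n) A)) : inl i ∈ A := by
  by_contra hi
  exact h _ (inl_mem_intentOf_iff.2 hi) rfl

theorem isExtent_iff :
    IsExtent (K1 n) A ↔ (inr () ∈ extentOf (K1 n) (intentOf (K1 n) A) → inr () ∈ A) := by
  refine ⟨fun hA h => hA ▸ h, fun h => isExtent_of_extentOf_intentOf_subset _ ?_⟩
  rintro (i | ⟨⟩) hg
  exacts [mem_of_inl_mem_extentOf_intentOf hg, h hg]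

theorem inr_mem_extentOf_intentOf [NeZero n] {j : Fin n} (h0 : inl 0 ∈ A) (hj : inl j ∈ A)
    (hj0 : j ≠ 0) : inr () ∈ extentOf (K1 n) (intentOf (K1 n) A) := by
  rintro (_ | (_ | _)) hm
  · trivial
  · exact hj0 (Fin.val_eq_zero_iff.1 (hm _ hj))
  · exact hm _ h0 rfl

abbrev Code (n : ℕ) [NeZero n] := Set (Fin n) ⊕ Set {i : Fin n // i ≠ 0} ⊕ Unit

variable [NeZero n]

def extentOfCode : Code n → Set (Fin n ⊕ Unit)
  | inl U => insert (inr ()) (inl '' U)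
  | inr (inl V) => (fun i => inl i.1) '' V
  | inr (inr _) => {inl 0}

open Classical in
noncomputable def codeOfExtent (A : Set (Fin n ⊕ Unit)) : Code n :=
  if inr () ∈ A then inl {i | inl i ∈ A}
  else if inl 0 ∈ A then inr (inr ())
  else inr (inl {i | inl i.1 ∈ A})

theorem isExtent_extentOfCode (c : Code n) : IsExtent (K1 n) (extentOfCode c) := by
  rw [isExtent_iff]
  rcases c with U | V | _
  · exact fun _ => Set.mem_insert _ _
  · intro h
    have hm₂ : inr true ∈ intentOf (K1 n) (extentOfCode (inr (inl V))) := by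
      rintro _ ⟨i, -, rfl⟩
      exact Fin.val_ne_zero_iff.2 i.2
    exact (h _ hm₂).elim
  · intro h
    have hm₁ : inr false ∈ intentOf (K1 n) (extentOfCode (inr (inr ()))) := by
      rintro _ rfl
      rfl
    exact (h _ hm₁).elim

theorem codeOfExtent_extentOfCode (c : Code n) :
    codeOfExtent (extentOfCode c) = c := by
  rcases c with U | V | _ <;> simp +contextual [codeOfExtent, extentOfCode, Set.ext_iff]

theorem extentOfCode_codeOfExtent (hA : IsExtent (K1 n) A) :
    extentOfCode (codeOfExtent A) = A := by
  unfold codeOfExtent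
  split_ifs with h1 h0
  · ext (i | ⟨⟩) <;> simp [extentOfCode, h1]
  · ext (i | ⟨⟩)
    · refine ⟨?_, fun hi => ?_⟩
      · rintro ⟨⟩
        exact h0
      · by_contra hi0
        exact h1 (hA ▸ inr_mem_extentOf_intentOf h0 hi (by simpa [extentOfCode] using hi0))
    · simp [extentOfCode, h1]
  · ext (i | ⟨⟩)
    · simp only [extentOfCode, Set.mem_image, Subtype.exists]
      exact ⟨fun ⟨_, _, hj, rfl⟩ => hj, fun hi => ⟨i, by rintro rfl; exact h0 hi, hi, rfl⟩⟩
    · simp [extentOfCode, h1]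

noncomputable def extentsEquivCode : {A // IsExtent (K1 n) A} ≃ Code n where
  toFun A := codeOfExtent A.1
  invFun c := ⟨extentOfCode c, isExtent_extentOfCode c⟩
  left_inv A := Subtype.ext (extentOfCode_codeOfExtent A.2)
  right_inv := codeOfExtent_extentOfCode

end K1

/-- For `n ≥ 2`, the context `K¹_n` has exactly `2^n + 2^(n-1) + 1` formal
concepts. -/
theorem stmt9 (n : ℕ) (hn : 2 ≤ n) :
    Nat.card (Concepts (K1 n)) = 2 ^ n + 2 ^ (n - 1) + 1 := by
  have : NeZero n := ⟨by omega⟩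
  rw [Nat.card_congr ((conceptsEquivExtents _).trans K1.extentsEquivCode)]
  simp [add_assoc]
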